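/- Let D = ∏_{i=1}^d [a_i, b_i] ⊂ ℝ^d with a_i < b_i, let u ⊆ {1,…,d}, and let f : D → ℝ be |u| times continuously differentiable. Then for every anchor c ∈ D and every x ∈ D: f_{u,c}(x) = ∫_{D_u} ∂_u f(t^{u,c}) · M_u(t_u, x_u) dt_u, where ∂_u f := ∂^{|u|} f / ∏_{i∈u} ∂x_i, t^{u,c} ∈ D is the point whose i-th coordinate is t_i for i ∈ u and c_i for i ∉ u, the integral is over t_u ∈ D_u = ∏_{i∈u} [a_i, b_i] with respect to Lebesgue measure, and M_u(t_u, x_u) := ∏_{i∈u} M_i(t_i, x_i) with M_i(t_i, x_i) = 1 if c_i < t_i < x_i, M_i(t_i, x_i) = −1 if x_i < t_i < c_i, and M_i(t_i, x_i) = 0 otherwise. -/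

import Mathlib

open MeasureTheory

/-- The anchored decomposition term
`f_{u,c}(x) = Σ_{v ⊆ u} (−1)^{|u|−|v|} f(x^{v,c})`. -/
noncomputable def anchoredTerm {d : ℕ} (f : (Fin d → ℝ) → ℝ) (c : Fin d → ℝ)
    (u : Finset (Fin d)) (x : Fin d → ℝ) : ℝ :=
  ∑ v ∈ u.powerset, (-1 : ℝ) ^ (u.card - v.card) * f (fun i => if i ∈ v then x i else c i)

/-- The mixed partial derivative `∂_u f = ∂^{|u|} f / ∏_{i∈u} ∂x_i`. -/
noncomputable def mixedPartial {d : ℕ} (u : Finset (Fin d)) (f : (Fin d → ℝ) → ℝ) :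
    (Fin d → ℝ) → ℝ :=
  u.toList.foldr (fun i g => fun x => fderiv ℝ g x (Pi.single i 1)) f

/-- The kernel `M_i(t_i, x_i)` relative to the anchor coordinate `c_i`:
`1` if `c_i < t_i < x_i`, `−1` if `x_i < t_i < c_i`, `0` otherwise. -/
noncomputable def anchorKernel (c t x : ℝ) : ℝ :=
  if c < t ∧ t < x then 1 else if x < t ∧ t < c then -1 else 0

/-!
The proof is an induction over the list `u.toList` along which the mixed partial is taken. If its
head is `j` and `s = u \ {j}`, the anchored term splits as
`f_{u,c}(x) = f_{s,c[j ↦ x_j]}(x) - f_{s,c}(x)`. On the integral side, Fubini isolates the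
integral in `t_j`; since `M_j(·, x_j)` is the signed indicator of the interval from `c_j` to
`x_j`, that integral of `∂_j ∂_s f` is, by the fundamental theorem of calculus, the difference of
`∂_s f` at `t_j = x_j` and `t_j = c_j`, which is the same splitting for the integrands.
-/

open Set

theorem anchorKernel_eq_indicator_sub (c t x : ℝ) :
    anchorKernel c t x = (Ioo c x).indicator 1 t - (Ioo x c).indicator 1 t := by
  unfold anchorKernel indicator
  simp only [mem_Ioo, Pi.one_apply]
  split_ifs <;> grind

theorem measurable_anchorKernel (c x : ℝ) : Measurable fun t => anchorKernel c t x := by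
  simp_rw [anchorKernel_eq_indicator_sub]
  exact (measurable_one.indicator measurableSet_Ioo).sub
    (measurable_one.indicator measurableSet_Ioo)

theorem abs_anchorKernel_le_one (c t x : ℝ) : |anchorKernel c t x| ≤ 1 := by
  unfold anchorKernel; split_ifs <;> norm_num

theorem setIntegral_mul_anchorKernel {g g' : ℝ → ℝ} (hg : ∀ t, HasDerivAt g (g' t) t)
    (hg' : Continuous g') {A B c x : ℝ} (hc : c ∈ Icc A B) (hx : x ∈ Icc A B) :
    ∫ t in Icc A B, g' t * anchorKernel c t x = g x - g c := by
  have hsub : ∀ {p q}, p ∈ Icc A B → q ∈ Icc A B → Ioo p q ⊆ Icc A B :=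
    fun hp hq => Ioo_subset_Icc_self.trans (Icc_subset_Icc hp.1 hq.2)
  have hint : ∀ p q, IntegrableOn ((Ioo p q).indicator g') (Icc A B) :=
    fun _ _ => hg'.integrableOn_Icc.indicator measurableSet_Ioo
  simp_rw [anchorKernel_eq_indicator_sub, mul_sub, ← indicator_mul_right, Pi.one_apply, mul_one]
  rw [integral_sub (hint c x) (hint x c), setIntegral_indicator measurableSet_Ioo,
    setIntegral_indicator measurableSet_Ioo, inter_eq_right.2 (hsub hc hx),
    inter_eq_right.2 (hsub hx hc), ← integral_Ioc_eq_integral_Ioo,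
    ← integral_Ioc_eq_integral_Ioo]
  exact intervalIntegral.integral_eq_sub_of_hasDerivAt (fun t _ => hg t)
    (hg'.intervalIntegrable c x)

theorem integrableOn_mul_prod_anchorKernel {ι : Type*} [Fintype ι] {G : (ι → ℝ) → ℝ}
    (hG : Continuous G) (a b c x : ι → ℝ) :
    IntegrableOn (fun t => G t * ∏ i, anchorKernel (c i) (t i) (x i))
      (univ.pi fun i => Icc (a i) (b i)) := by
  have hK : Measurable fun t : ι → ℝ => ∏ i, anchorKernel (c i) (t i) (x i) :=
    Finset.measurable_prod _ fun i _ => (measurable_anchorKernel _ _).comp (measurable_pi_apply i)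
  refine (hG.continuousOn.integrableOn_compact (isCompact_univ_pi fun i => isCompact_Icc)).mul_bdd
    hK.aestronglyMeasurable (c := 1) (Filter.Eventually.of_forall fun t => ?_)
  rw [Real.norm_eq_abs, Finset.abs_prod]
  exact Finset.prod_le_one (fun i _ => abs_nonneg _) fun i _ => abs_anchorKernel_le_one _ _ _

section InsertCoord

variable {ι : Type*} [DecidableEq ι] {j : ι} {s : Finset ι}

def insertCoord (j : ι) (y : {i // i ∈ s} → ℝ) (τ : ℝ) : {i // i ∈ insert j s} → ℝ :=
  fun i => if h : i.1 ∈ s then y ⟨i.1, h⟩ else τ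

noncomputable def insertCoordEquiv (hj : j ∉ s) :
    (({i // i ∈ s} → ℝ) × ℝ) ≃ᵐ ({i // i ∈ insert j s} → ℝ) :=
  ((MeasurableEquiv.refl _).prodCongr
      (MeasurableEquiv.funUnique {i // i ∈ ({j} : Finset ι)} ℝ).symm).trans <|
    (MeasurableEquiv.piFinsetUnion (fun _ => ℝ) (Finset.disjoint_singleton_right.2 hj)).trans <|
      MeasurableEquiv.piCongrLeft (fun _ => ℝ)
        (Equiv.subtypeEquivRight fun i => by rw [Finset.mem_union, Finset.mem_insert,
          Finset.mem_singleton, or_comm])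

theorem insertCoordEquiv_symm_apply (hj : j ∉ s) (F : {i // i ∈ insert j s} → ℝ) :
    (insertCoordEquiv hj).symm F =
      (fun i => F ⟨i.1, Finset.mem_insert_of_mem i.2⟩, F ⟨j, Finset.mem_insert_self j s⟩) :=
  rfl

theorem insertCoordEquiv_apply (hj : j ∉ s) (y : {i // i ∈ s} → ℝ) (τ : ℝ) :
    insertCoordEquiv hj (y, τ) = insertCoord j y τ := by
  rw [eq_comm, ← MeasurableEquiv.symm_apply_eq, insertCoordEquiv_symm_apply]
  simp [insertCoord, hj]

theorem measurePreserving_insertCoordEquiv (hj : j ∉ s) :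
    MeasurePreserving (insertCoordEquiv hj) volume volume := by
  have h1 := (MeasurePreserving.id (volume : Measure ({i // i ∈ s} → ℝ))).prod
    ((volume_preserving_funUnique {i // i ∈ ({j} : Finset ι)} ℝ).symm _)
  have h2 := (volume_preserving_piFinsetUnion (fun _ : ι => ℝ)
    (Finset.disjoint_singleton_right.2 hj)).comp h1
  have h3 := (volume_measurePreserving_piCongrLeft (fun _ : {i // i ∈ insert j s} => ℝ)
    (Equiv.subtypeEquivRight (q := fun i => i ∈ insert j s) fun i => by
      rw [Finset.mem_union, Finset.mem_insert, Finset.mem_singleton, or_comm])).comp h2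
  exact h3

theorem insertCoordEquiv_preimage_univ_pi (hj : j ∉ s) (S : ι → Set ℝ) :
    insertCoordEquiv hj ⁻¹' univ.pi (fun i : {i // i ∈ insert j s} => S i) =
      univ.pi (fun i : {i // i ∈ s} => S i) ×ˢ S j := by
  ext ⟨y, τ⟩
  simp only [mem_preimage, mem_prod, mem_univ_pi, insertCoordEquiv_apply, insertCoord]
  refine ⟨fun h => ⟨fun i => ?_, ?_⟩, fun ⟨hy, hτ⟩ ⟨i, hi⟩ => ?_⟩
  · simpa [i.2] using h ⟨i.1, Finset.mem_insert_of_mem i.2⟩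
  · simpa [hj] using h ⟨j, Finset.mem_insert_self j s⟩
  · by_cases h : i ∈ s
    · simpa [h] using hy ⟨i, h⟩
    · obtain rfl : i = j := (Finset.mem_insert.1 hi).resolve_right h
      simpa [h] using hτ

theorem setIntegral_univ_pi_insert (hj : j ∉ s) (S : ι → Set ℝ)
    {F : ({i // i ∈ insert j s} → ℝ) → ℝ}
    (hF : IntegrableOn F (univ.pi fun i : {i // i ∈ insert j s} => S i)) :
    ∫ t in univ.pi (fun i : {i // i ∈ insert j s} => S i), F t =
      ∫ y in univ.pi (fun i : {i // i ∈ s} => S i), ∫ τ in S j, F (insertCoord j y τ) := by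
  have hmp := measurePreserving_insertCoordEquiv hj
  have hemb := (insertCoordEquiv hj).measurableEmbedding
  rw [← hmp.setIntegral_preimage_emb hemb, insertCoordEquiv_preimage_univ_pi]
  refine (setIntegral_prod (fun z => F (insertCoordEquiv hj z)) ?_).trans ?_
  · rw [← insertCoordEquiv_preimage_univ_pi hj]
    exact (hmp.integrableOn_comp_preimage hemb).2 hF
  · simp_rw [insertCoordEquiv_apply]

theorem prod_insertCoord {M : Type*} [CommMonoid M] (hj : j ∉ s) (g : ι → ℝ → M)
    (y : {i // i ∈ s} → ℝ) (τ : ℝ) :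
    ∏ i : {i // i ∈ insert j s}, g i (insertCoord j y τ i) =
      g j τ * ∏ i : {i // i ∈ s}, g i (y i) := by
  have h := Finset.prod_coe_sort (insert j s)
    fun k => g k (if h : k ∈ s then y ⟨k, h⟩ else τ)
  rw [Finset.prod_insert hj, dif_neg hj, ← Finset.prod_coe_sort s] at h
  simpa [insertCoord] using h

end InsertCoord

section AnchoredPoint

variable {ι : Type*} [DecidableEq ι]

def anchoredPoint (c : ι → ℝ) {u : Finset ι} (t : {i // i ∈ u} → ℝ) : ι → ℝ :=
  fun i => if h : i ∈ u then t ⟨i, h⟩ else c i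

theorem continuous_anchoredPoint (c : ι → ℝ) (u : Finset ι) :
    Continuous (anchoredPoint c : ({i // i ∈ u} → ℝ) → ι → ℝ) := by
  refine continuous_pi fun i => ?_
  by_cases h : i ∈ u
  · simpa [anchoredPoint, h] using continuous_apply (⟨i, h⟩ : {i // i ∈ u})
  · simpa [anchoredPoint, h] using continuous_const

variable {j : ι} {s : Finset ι}

theorem anchoredPoint_apply_of_notMem (c : ι → ℝ) (y : {i // i ∈ s} → ℝ) (hj : j ∉ s) :
    anchoredPoint c y j = c j :=
  dif_neg hj

theorem anchoredPoint_update (hj : j ∉ s) (c : ι → ℝ) (y : {i // i ∈ s} → ℝ) (τ : ℝ) :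
    anchoredPoint (Function.update c j τ) y = Function.update (anchoredPoint c y) j τ := by
  ext i
  by_cases hi : i = j
  · subst hi
    simp [anchoredPoint, hj]
  · simp [anchoredPoint, Function.update_of_ne hi]

theorem anchoredPoint_insertCoord (hj : j ∉ s) (c : ι → ℝ) (y : {i // i ∈ s} → ℝ) (τ : ℝ) :
    anchoredPoint c (insertCoord j y τ) = Function.update (anchoredPoint c y) j τ := by
  ext i
  by_cases hi : i = j
  · subst hi
    simp [anchoredPoint, insertCoord, hj]
  · by_cases his : i ∈ s <;> simp [anchoredPoint, insertCoord, hi, his]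

end AnchoredPoint

section Calculus

variable {ι : Type*} [DecidableEq ι]

noncomputable def iteratedPartial (l : List ι) (f : (ι → ℝ) → ℝ) : (ι → ℝ) → ℝ :=
  l.foldr (fun i g x => fderiv ℝ g x (Pi.single i 1)) f

theorem iteratedPartial_cons (j : ι) (l : List ι) (f : (ι → ℝ) → ℝ) (x : ι → ℝ) :
    iteratedPartial (j :: l) f x = fderiv ℝ (iteratedPartial l f) x (Pi.single j 1) :=
  rfl

theorem contDiff_iteratedPartial [Fintype ι] {l : List ι} {m : ℕ} {f : (ι → ℝ) → ℝ}
    (hf : ContDiff ℝ (l.length + m : ℕ) f) : ContDiff ℝ m (iteratedPartial l f) := by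
  induction l generalizing m with
  | nil => simpa [iteratedPartial] using hf
  | cons j l ih =>
    have hl : ContDiff ℝ (m + 1 : ℕ) (iteratedPartial l f) :=
      ih (by rwa [List.length_cons, Nat.add_right_comm] at hf)
    exact (hl.fderiv_right (m := m) le_rfl).clm_apply contDiff_const

theorem setIntegral_fderiv_update_mul_anchorKernel [Fintype ι] {g : (ι → ℝ) → ℝ}
    (hg : ContDiff ℝ 1 g) (p : ι → ℝ) (j : ι) {A B c x : ℝ} (hc : c ∈ Icc A B) (hx : x ∈ Icc A B) :
    ∫ τ in Icc A B, fderiv ℝ g (Function.update p j τ) (Pi.single j 1) * anchorKernel c τ x =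
      g (Function.update p j x) - g (Function.update p j c) := by
  refine setIntegral_mul_anchorKernel (g := g ∘ Function.update p j) (fun τ => ?_) ?_ hc hx
  · exact ((hg.differentiable one_ne_zero _).hasFDerivAt.comp_hasDerivAt τ
      (hasDerivAt_update p j τ))
  · exact ((hg.continuous_fderiv one_ne_zero).comp
      (continuous_const.update j continuous_id)).clm_apply continuous_const

theorem setIntegral_iteratedPartial_cons_insertCoord [Fintype ι] {j : ι} {s : Finset ι}
    (hj : j ∉ s) {l : List ι} {f : (ι → ℝ) → ℝ} (hf : ContDiff ℝ 1 (iteratedPartial l f))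
    {A B : ℝ} {c x : ι → ℝ} (hc : c j ∈ Icc A B) (hx : x j ∈ Icc A B) (y : {i // i ∈ s} → ℝ) :
    ∫ τ in Icc A B, iteratedPartial (j :: l) f (anchoredPoint c (insertCoord j y τ)) *
        ∏ i, anchorKernel (c i.1) (insertCoord j y τ i) (x i.1) =
      (iteratedPartial l f (anchoredPoint (Function.update c j (x j)) y) -
        iteratedPartial l f (anchoredPoint c y)) * ∏ i, anchorKernel (c i.1) (y i) (x i.1) := by
  simp_rw [prod_insertCoord hj (fun i τ => anchorKernel (c i) τ (x i)), ← mul_assoc,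
    anchoredPoint_insertCoord hj, iteratedPartial_cons]
  rw [integral_mul_const, setIntegral_fderiv_update_mul_anchorKernel hf _ _ hc hx,
    anchoredPoint_update hj, ← anchoredPoint_apply_of_notMem c y hj, Function.update_eq_self]

end Calculus

theorem anchoredTerm_insert {d : ℕ} (f : (Fin d → ℝ) → ℝ) (c x : Fin d → ℝ) {j : Fin d}
    {s : Finset (Fin d)} (hj : j ∉ s) :
    anchoredTerm f c (insert j s) x =
      anchoredTerm f (Function.update c j (x j)) s x - anchoredTerm f c s x := by
  unfold anchoredTerm
  rw [Finset.sum_powerset_insert hj, sub_eq_neg_add, ← Finset.sum_neg_distrib]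
  congr 1 <;> refine Finset.sum_congr rfl fun v hv => ?_
  · have hle : v.card ≤ s.card := Finset.card_le_card (Finset.mem_powerset.1 hv)
    rw [Finset.card_insert_of_notMem hj, Nat.sub_add_comm hle, pow_succ]
    ring
  · have hjv : j ∉ v := fun h => hj (Finset.mem_powerset.1 hv h)
    rw [Finset.card_insert_of_notMem hj, Finset.card_insert_of_notMem hjv, Nat.add_sub_add_right]
    congr 2
    ext i
    by_cases hij : i = j
    · subst hij
      simp [hjv]
    · simp [hij]

theorem anchoredTerm_eq_setIntegral_iteratedPartial {d : ℕ} (a b : Fin d → ℝ)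
    {l : List (Fin d)} (hl : l.Nodup) {f : (Fin d → ℝ) → ℝ} (hf : ContDiff ℝ l.length f)
    {c x : Fin d → ℝ} (hc : c ∈ univ.pi fun i => Icc (a i) (b i))
    (hx : x ∈ univ.pi fun i => Icc (a i) (b i)) :
    anchoredTerm f c l.toFinset x =
      ∫ t in univ.pi (fun i : {i // i ∈ l.toFinset} => Icc (a i.1) (b i.1)),
        iteratedPartial l f (anchoredPoint c t) * ∏ i, anchorKernel (c i.1) (t i) (x i.1) := by
  induction l generalizing c with
  | nil =>
    rw [List.toFinset_nil, eq_univ_of_forall fun t => mem_univ_pi.2 isEmptyElim,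
      Measure.restrict_univ, volume_pi, Measure.pi_of_empty _ isEmptyElim, integral_dirac]
    simp only [anchoredTerm, Finset.powerset_empty, Finset.card_empty, zero_tsub, pow_zero,
      one_mul, Finset.sum_singleton, Finset.notMem_empty, ↓reduceIte, iteratedPartial,
      List.foldr_nil, Finset.univ_eq_empty, Finset.prod_empty, mul_one]
    rfl
  | cons j l ih =>
    obtain ⟨hj, hl⟩ := List.nodup_cons.1 hl
    have hjs : j ∉ l.toFinset := List.mem_toFinset.not.2 hj
    have hf' : ContDiff ℝ l.length f := hf.of_le (by simp)
    have hg : ContDiff ℝ 1 (iteratedPartial l f) :=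
      contDiff_iteratedPartial (m := 1) (by simpa using hf)
    have hG : Continuous (iteratedPartial (j :: l) f) :=
      (contDiff_iteratedPartial (m := 0) (by simpa using hf)).continuous
    have hc' : Function.update c j (x j) ∈ univ.pi fun i => Icc (a i) (b i) :=
      (update_mem_pi_iff_of_mem hc).2 fun _ => hx j trivial
    rw [List.toFinset_cons, setIntegral_univ_pi_insert hjs (fun i => Icc (a i) (b i))
      (integrableOn_mul_prod_anchorKernel
        (G := fun t => iteratedPartial (j :: l) f (anchoredPoint c t))
        (hG.comp (continuous_anchoredPoint c _)) _ _ (fun i => c i.1) (fun i => x i.1))]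
    have hint : ∀ c₀ : Fin d → ℝ, IntegrableOn
        (fun y => iteratedPartial l f (anchoredPoint c₀ y) *
          ∏ i, anchorKernel (c₀ i.1) (y i) (x i.1))
        (univ.pi fun i : {i // i ∈ l.toFinset} => Icc (a i) (b i)) := fun c₀ =>
      integrableOn_mul_prod_anchorKernel (G := fun y => iteratedPartial l f (anchoredPoint c₀ y))
        (hg.continuous.comp (continuous_anchoredPoint c₀ _)) _ _ (fun i => c₀ i.1)
        (fun i => x i.1)
    have hker : ∀ i : {i // i ∈ l.toFinset}, Function.update c j (x j) i = c i := fun i =>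
      Function.update_of_ne (ne_of_mem_of_not_mem i.2 hjs) _ _
    rw [anchoredTerm_insert _ _ _ hjs, ih hl hf' hc', ih hl hf' hc,
      ← integral_sub (hint _) (hint c)]
    refine setIntegral_congr_fun (MeasurableSet.univ_pi fun _ => measurableSet_Icc) fun y _ => ?_
    rw [setIntegral_iteratedPartial_cons_insertCoord hjs hg (hc j trivial) (hx j trivial), sub_mul]
    simp only [hker]

theorem statement_7_general {d : ℕ} (a b : Fin d → ℝ)
    (u : Finset (Fin d))
    (f : (Fin d → ℝ) → ℝ) (hf : ContDiff ℝ u.card f) :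
    ∀ c ∈ Set.univ.pi fun i => Set.Icc (a i) (b i),
      ∀ x ∈ Set.univ.pi fun i => Set.Icc (a i) (b i),
        anchoredTerm f c u x =
          ∫ t : {i : Fin d // i ∈ u} → ℝ in
              Set.univ.pi (fun i : {i : Fin d // i ∈ u} => Set.Icc (a i.1) (b i.1)),
            mixedPartial u f (fun i => if h : i ∈ u then t ⟨i, h⟩ else c i) *
              ∏ i : {i : Fin d // i ∈ u}, anchorKernel (c i.1) (t i) (x i.1) := by
  intro c hc x hx
  have h := anchoredTerm_eq_setIntegral_iteratedPartial a b u.nodup_toList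
    (by rwa [Finset.length_toList]) hc hx
  rwa [Finset.toList_toFinset] at h

/-- for `f` which is `|u|` times continuously differentiable on the
box `D = ∏ [a i, b i]`, the anchored term has the integral representation
`f_{u,c}(x) = ∫_{D_u} ∂_u f(t^{u,c}) ∏_{i∈u} M_i(t_i, x_i) dt_u`. -/
theorem statement_7 {d : ℕ} (a b : Fin d → ℝ) (hab : ∀ i, a i < b i)
    (u : Finset (Fin d))
    (f : (Fin d → ℝ) → ℝ) (hf : ContDiff ℝ u.card f) :
    ∀ c ∈ Set.univ.pi fun i => Set.Icc (a i) (b i),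
      ∀ x ∈ Set.univ.pi fun i => Set.Icc (a i) (b i),
        anchoredTerm f c u x =
          ∫ t : {i : Fin d // i ∈ u} → ℝ in
              Set.univ.pi (fun i : {i : Fin d // i ∈ u} => Set.Icc (a i.1) (b i.1)),
            mixedPartial u f (fun i => if h : i ∈ u then t ⟨i, h⟩ else c i) *
              ∏ i : {i : Fin d // i ∈ u}, anchorKernel (c i.1) (t i) (x i.1) :=
  statement_7_general a b u f hf
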